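/- arXiv:1301.4560 — 2 statements merged into one kernel-verified Lean document; each statement's English description precedes it below -/
import Mathlib

section
/- For every ω ∈ ℝ and every y ∈ ℝ³, the function x ↦ Φ(x,y) satisfies the Helmholtz equation ΔₓΦ(x,y) + ω²Φ(x,y) = 0 at every point x ∈ ℝ³ with x ≠ y; that is, Φ(·,y) is annihilated by the operator −Δ−ω² away from the singularity y. -/
noncomputable section

open Real

/-- The Helmholtz fundamental solution `Φ(x,y) = e^{iω‖x−y‖}/(4π‖x−y‖)`. -/
def Phi (ω : ℝ) (x y : EuclideanSpace ℝ (Fin 3)) : ℂ :=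
  Complex.exp (Complex.I * ω * ‖x - y‖) / (4 * Real.pi * ‖x - y‖)

/-- The Laplacian `Δu = ∂₁²u + ∂₂²u + ∂₃²u` of a function `u : ℝ³ → ℂ`. -/
def laplacian3 (u : EuclideanSpace ℝ (Fin 3) → ℂ) (x : EuclideanSpace ℝ (Fin 3)) : ℂ :=
  ∑ j : Fin 3,
    fderiv ℝ (fun z => fderiv ℝ u z (EuclideanSpace.single j 1)) x (EuclideanSpace.single j 1)

/-!
`Φ(·, y)` is radial: `Φ(x, y) = H(‖x - y‖)` with `H(t) = e^{iωt}/(4πt)`. For a radial function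
`f(‖x - y‖)` on a `d`-dimensional inner product space, the chain rule through the norm and
Parseval's identity `∑ᵢ ⟪x - y, bᵢ⟫² = ‖x - y‖²` give the radial Laplacian
`∑ᵢ ∂_{bᵢ}² = f''(r) + (d - 1)/r · f'(r)`. For `d = 3` this is `r⁻¹ (r f)''`, and
`r H(r) = e^{iωr}/(4π)` satisfies `(r H)'' = -ω² r H`.
-/

open Filter Topology
open scoped RealInnerProductSpace

section RadialFunction
variable {E F : Type*} [NormedAddCommGroup E] [InnerProductSpace ℝ E]
  [NormedAddCommGroup F] [NormedSpace ℝ F]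

theorem hasFDerivAt_norm {x : E} (hx : x ≠ 0) :
    HasFDerivAt (‖·‖) (‖x‖⁻¹ • innerSL ℝ x) x := by
  have hx' : ‖x‖ ^ 2 ≠ 0 := by positivity
  have h := (Real.hasDerivAt_sqrt hx').comp_hasFDerivAt x
    (hasStrictFDerivAt_norm_sq x).hasFDerivAt
  simp only [Function.comp_def, Real.sqrt_sq (norm_nonneg _)] at h
  refine h.congr_fderiv ?_
  ext v
  simp
  field_simp

variable {f f' : ℝ → F} {g : F} {x y : E}

theorem HasDerivAt.hasFDerivAt_comp_norm_sub (hf : HasDerivAt f g ‖x - y‖) (hxy : x ≠ y) :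
    HasFDerivAt (fun z => f ‖z - y‖) ((‖x - y‖⁻¹ • innerSL ℝ (x - y)).smulRight g) x := by
  have h := hf.hasFDerivAt.comp x <| (hasFDerivAt_norm (sub_ne_zero.2 hxy)).comp x
    ((hasFDerivAt_id x).sub_const y)
  refine h.congr_fderiv ?_
  ext v
  simp [mul_smul, sub_smul]

theorem fderiv_comp_norm_sub_apply (hf : HasDerivAt f g ‖x - y‖) (hxy : x ≠ y) (v : E) :
    fderiv ℝ (fun z => f ‖z - y‖) x v = ⟪x - y, v⟫ • ‖x - y‖⁻¹ • g := by
  rw [(hf.hasFDerivAt_comp_norm_sub hxy).fderiv]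
  simp [smul_smul, mul_comm, inner_sub_left]

theorem fderiv_fderiv_comp_norm_sub_apply (hf : ∀ᶠ t in 𝓝 ‖x - y‖, HasDerivAt f (f' t) t)
    (hf' : HasDerivAt f' g ‖x - y‖) (hxy : x ≠ y) (v : E) :
    fderiv ℝ (fun z => fderiv ℝ (fun w => f ‖w - y‖) z v) x v =
      ‖v‖ ^ 2 • ‖x - y‖⁻¹ • f' ‖x - y‖ +
        (⟪x - y, v⟫ ^ 2 * ‖x - y‖⁻¹) • (‖x - y‖⁻¹ • g - (‖x - y‖ ^ 2)⁻¹ • f' ‖x - y‖) := by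
  have hr : ‖x - y‖ ≠ 0 := norm_ne_zero_iff.2 (sub_ne_zero.2 hxy)
  have hnear : ∀ᶠ z in 𝓝 x, z ≠ y ∧ HasDerivAt f (f' ‖z - y‖) ‖z - y‖ :=
    (eventually_ne_nhds hxy).and <|
      ((continuous_norm.comp (continuous_id.sub continuous_const)).tendsto x).eventually hf
  have hgrad : (fun z => fderiv ℝ (fun w => f ‖w - y‖) z v) =ᶠ[𝓝 x]
      fun z => ⟪z - y, v⟫ • ‖z - y‖⁻¹ • f' ‖z - y‖ :=
    hnear.mono fun z ⟨hz, hfz⟩ => fderiv_comp_norm_sub_apply hfz hz v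
  have hcoord : HasFDerivAt (fun z => ⟪z - y, v⟫) (innerSL ℝ v) x := by
    have h := ((hasFDerivAt_id x).sub_const y).inner ℝ (hasFDerivAt_const v x)
    refine h.congr_fderiv ?_
    ext w
    simp [real_inner_comm]
  have hK : HasDerivAt (fun t => t⁻¹ • f' t) _ ‖x - y‖ := (hasDerivAt_inv hr).smul hf'
  have hprod : HasFDerivAt (fun z => ⟪z - y, v⟫ • ‖z - y‖⁻¹ • f' ‖z - y‖) _ x :=
    hcoord.smul (hK.hasFDerivAt_comp_norm_sub hxy)
  rw [hgrad.fderiv_eq, hprod.fderiv]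
  simp only [add_apply, smul_apply,
    ContinuousLinearMap.smulRight_apply, innerSL_apply_apply, real_inner_self_eq_norm_sq]
  match_scalars <;> ring

theorem sum_fderiv_fderiv_comp_norm_sub {ι : Type*} [Fintype ι] (b : OrthonormalBasis ι ℝ E)
    (hf : ∀ᶠ t in 𝓝 ‖x - y‖, HasDerivAt f (f' t) t) (hf' : HasDerivAt f' g ‖x - y‖)
    (hxy : x ≠ y) :
    ∑ i, fderiv ℝ (fun z => fderiv ℝ (fun w => f ‖w - y‖) z (b i)) x (b i) =
      g + ((Module.finrank ℝ E - 1 : ℝ) / ‖x - y‖) • f' ‖x - y‖ := by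
  have hr : ‖x - y‖ ≠ 0 := norm_ne_zero_iff.2 (sub_ne_zero.2 hxy)
  have hnorm : ∑ i, ‖b i‖ ^ 2 = Module.finrank ℝ E := by
    simp [b.orthonormal.1, Module.finrank_eq_card_basis b.toBasis]
  have hparseval : ∑ i, ⟪x - y, b i⟫ ^ 2 = ‖x - y‖ ^ 2 := by
    simpa [sq, real_inner_comm, real_inner_self_eq_norm_sq] using
      b.sum_inner_mul_inner (x - y) (x - y)
  simp only [fderiv_fderiv_comp_norm_sub_apply hf hf' hxy, Finset.sum_add_distrib,
    ← Finset.sum_smul, ← Finset.sum_mul, hnorm, hparseval]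
  match_scalars
  · field_simp
    ring
  · field_simp

end RadialFunction

section HelmholtzProfile
open Complex

def helmholtzProfile (ω t : ℝ) : ℂ := exp (I * ω * t) / (4 * π * t)

def helmholtzProfileDeriv (ω t : ℝ) : ℂ := exp (I * ω * t) * (I * ω * t - 1) / (4 * π * t ^ 2)

variable (ω : ℝ) {t : ℝ}

theorem hasDerivAt_helmholtzProfile (ht : t ≠ 0) :
    HasDerivAt (helmholtzProfile ω) (helmholtzProfileDeriv ω t) t := by
  have ht' : (4 * π * t : ℂ) ≠ 0 := by simp [pi_ne_zero, ht]
  have hphase := ((hasDerivAt_id' (t : ℂ)).const_mul (I * ω)).cexp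
  have hden := (hasDerivAt_id' (t : ℂ)).const_mul (4 * (π : ℂ))
  refine ((hphase.div hden ht').comp_ofReal).congr_deriv ?_
  rw [helmholtzProfileDeriv]
  field_simp

theorem hasDerivAt_helmholtzProfileDeriv (ht : t ≠ 0) :
    HasDerivAt (helmholtzProfileDeriv ω)
      (exp (I * ω * t) * (2 - 2 * I * ω * t - ω ^ 2 * t ^ 2) / (4 * π * t ^ 3)) t := by
  have htC : (t : ℂ) ≠ 0 := by exact_mod_cast ht
  have ht' : (4 * π * t ^ 2 : ℂ) ≠ 0 := by simp [pi_ne_zero, ht]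
  have hlin := (hasDerivAt_id' (t : ℂ)).const_mul (I * ω)
  have hnum : HasDerivAt (fun s => exp (I * ω * s) * (I * ω * s - 1)) _ (t : ℂ) :=
    hlin.cexp.mul (hlin.sub_const 1)
  have hden := (hasDerivAt_pow 2 (t : ℂ)).const_mul (4 * (π : ℂ))
  refine ((hnum.div hden ht').comp_ofReal).congr_deriv ?_
  field_simp
  linear_combination (ω : ℂ) ^ 2 * t ^ 3 * I_sq

end HelmholtzProfile

/-- For every `ω` and `y`, the function `x ↦ Φ(x,y)` satisfies the Helmholtz equation
`ΔₓΦ(x,y) + ω²Φ(x,y) = 0` at every `x ≠ y`. -/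
theorem phi_helmholtz (ω : ℝ) (y : EuclideanSpace ℝ (Fin 3))
    (x : EuclideanSpace ℝ (Fin 3)) (hxy : x ≠ y) :
    laplacian3 (fun x => Phi ω x y) x + (ω : ℂ) ^ 2 * Phi ω x y = 0 := by
  have hr : ‖x - y‖ ≠ 0 := norm_ne_zero_iff.2 (sub_ne_zero.2 hxy)
  have hΔ := sum_fderiv_fderiv_comp_norm_sub (EuclideanSpace.basisFun (Fin 3) ℝ)
    ((eventually_ne_nhds hr).mono fun t ht => hasDerivAt_helmholtzProfile ω ht)
    (hasDerivAt_helmholtzProfileDeriv ω hr) hxy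
  simp only [EuclideanSpace.basisFun_apply, finrank_euclideanSpace_fin] at hΔ
  change laplacian3 (fun x => helmholtzProfile ω ‖x - y‖) x
    + ω ^ 2 * helmholtzProfile ω ‖x - y‖ = 0
  rw [laplacian3, hΔ, helmholtzProfile, helmholtzProfileDeriv, Complex.real_smul]
  have hrC : (‖x - y‖ : ℂ) ≠ 0 := by exact_mod_cast hr
  push_cast
  field_simp
  ring
end
end

section
/- Let ω > 0, let θ ∈ ℝ³ be a unit vector and let y ∈ ℝ³. Then the Helmholtz fundamental solution has the far-field limit lim_{t→+∞} t · e^{−iωt} · Φ(tθ, y) = e^{−iω⟪θ,y⟫}/(4π). (This asymptotic behavior of the kernel along rays underlies passing from the integral representation of the scattered field to its electric far-field pattern.) -/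
noncomputable section

open Real Filter

/-! Along the ray `t ↦ tθ` one has `‖tθ - y‖ = t - ⟪θ, y⟫ + o(1)`, so the phase
`e^{iω‖tθ-y‖}` differs from `e^{iωt}` by the factor `e^{-iω⟪θ,y⟫} + o(1)`, while the amplitude
`1/‖tθ - y‖` is `(1 + o(1))/t`. -/

section RayAsymptotics

variable {E : Type*} [NormedAddCommGroup E] [InnerProductSpace ℝ E]

theorem tendsto_norm_smul_sub_div_atTop (θ y : E) :
    Tendsto (fun t : ℝ => ‖t • θ - y‖ / t) atTop (nhds ‖θ‖) := by
  have hlim : Tendsto (fun t : ℝ => ‖θ - t⁻¹ • y‖) atTop (nhds ‖θ‖) := by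
    simpa using
      (tendsto_const_nhds.sub ((tendsto_inv_atTop_zero (𝕜 := ℝ)).smul_const y)).norm
  refine hlim.congr' ?_
  filter_upwards [eventually_gt_atTop 0] with t ht
  have hfactor : t • θ - y = t • (θ - t⁻¹ • y) := by
    rw [smul_sub, smul_smul, mul_inv_cancel₀ ht.ne', one_smul]
  rw [hfactor, norm_smul, Real.norm_of_nonneg ht.le, mul_div_cancel_left₀ _ ht.ne']

theorem tendsto_norm_smul_sub_sub_self_atTop {θ : E} (hθ : ‖θ‖ = 1) (y : E) :
    Tendsto (fun t : ℝ => ‖t • θ - y‖ - t) atTop (nhds (-inner ℝ θ y)) := by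
  set a := inner ℝ θ y
  have hnum : Tendsto (fun t : ℝ => -2 * a + t⁻¹ * ‖y‖ ^ 2) atTop (nhds (-2 * a)) := by
    simpa using tendsto_const_nhds.add (tendsto_inv_atTop_zero.mul_const (‖y‖ ^ 2))
  have hden : Tendsto (fun t : ℝ => ‖t • θ - y‖ / t + 1) atTop (nhds 2) := by
    simpa [hθ, one_add_one_eq_two] using (tendsto_norm_smul_sub_div_atTop θ y).add_const 1
  have hquot := hnum.div hden two_ne_zero
  rw [show -2 * a / 2 = -a by ring] at hquot
  refine hquot.congr' ?_
  filter_upwards [eventually_gt_atTop 0] with t ht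
  -- `r - t = (r² - t²) / (r + t)` with `r = ‖tθ - y‖`, divided through by `t`
  have hsq : ‖t • θ - y‖ ^ 2 = t ^ 2 - 2 * t * a + ‖y‖ ^ 2 := by
    rw [norm_sub_sq_real, norm_smul, real_inner_smul_left, hθ, Real.norm_eq_abs, abs_of_pos ht]
    ring
  have hpos : 0 < ‖t • θ - y‖ / t + 1 := by positivity
  rw [Pi.div_apply, div_eq_iff hpos.ne']
  field_simp
  linear_combination -hsq

end RayAsymptotics

theorem mul_exp_mul_Phi_eq (ω : ℝ) {t : ℝ} (ht : t ≠ 0) {x y : EuclideanSpace ℝ (Fin 3)}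
    (hxy : x ≠ y) :
    (t : ℂ) * Complex.exp (-(Complex.I * ω * t)) * Phi ω x y
      = Complex.exp (Complex.I * ω * ((‖x - y‖ - t : ℝ) : ℂ)) * ((‖x - y‖ / t)⁻¹ : ℝ)
        / (4 * Real.pi) := by
  have hr : ((‖x - y‖ : ℝ) : ℂ) ≠ 0 := by
    exact_mod_cast norm_ne_zero_iff.mpr (sub_ne_zero.mpr hxy)
  have ht' : (t : ℂ) ≠ 0 := by exact_mod_cast ht
  rw [Phi, show Complex.I * ω * ((‖x - y‖ - t : ℝ) : ℂ)
      = Complex.I * ω * ‖x - y‖ + -(Complex.I * ω * t) by push_cast; ring, Complex.exp_add]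
  push_cast
  field_simp

theorem phi_farfield_limit_general (ω : ℝ)
    (θ y : EuclideanSpace ℝ (Fin 3)) (hθ : ‖θ‖ = 1) :
    Tendsto (fun t : ℝ => (t : ℂ) * Complex.exp (-(Complex.I * ω * t)) * Phi ω (t • θ) y)
      atTop (nhds (Complex.exp (-(Complex.I * ω * (inner ℝ θ y : ℝ))) / (4 * Real.pi))) := by
  have hphase : Tendsto (fun t : ℝ => Complex.exp (Complex.I * ω * ((‖t • θ - y‖ - t : ℝ) : ℂ)))
      atTop (nhds (Complex.exp (Complex.I * ω * ((-inner ℝ θ y : ℝ) : ℂ)))) :=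
    (Complex.continuous_exp.comp (continuous_const.mul Complex.continuous_ofReal)).tendsto _
      |>.comp (tendsto_norm_smul_sub_sub_self_atTop hθ y)
  have hamplitude : Tendsto (fun t : ℝ => ((‖t • θ - y‖ / t)⁻¹ : ℝ)) atTop (nhds 1) := by
    simpa [hθ] using (tendsto_norm_smul_sub_div_atTop θ y).inv₀ (by simp [hθ])
  have hlim := (hphase.mul (Complex.continuous_ofReal.tendsto 1 |>.comp hamplitude)).div_const
    (4 * (Real.pi : ℂ))
  rw [Complex.ofReal_one, mul_one, Complex.ofReal_neg, mul_neg] at hlim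
  refine hlim.congr' ?_
  filter_upwards [eventually_gt_atTop ‖y‖] with t hty
  have ht : 0 < t := (norm_nonneg y).trans_lt hty
  have hne : t • θ ≠ y := by
    rintro rfl
    rw [norm_smul, hθ, Real.norm_of_nonneg ht.le, mul_one] at hty
    exact lt_irrefl t hty
  exact (mul_exp_mul_Phi_eq ω ht.ne' hne).symm

/-- For `ω > 0`, a unit vector `θ` and `y ∈ ℝ³`, one has the far-field limit
`lim_{t→+∞} t e^{−iωt} Φ(tθ, y) = e^{−iω⟪θ,y⟫}/(4π)`. -/
theorem phi_farfield_limit (ω : ℝ) (hω : 0 < ω)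
    (θ y : EuclideanSpace ℝ (Fin 3)) (hθ : ‖θ‖ = 1) :
    Tendsto (fun t : ℝ => (t : ℂ) * Complex.exp (-(Complex.I * ω * t)) * Phi ω (t • θ) y)
      atTop (nhds (Complex.exp (-(Complex.I * ω * (inner ℝ θ y : ℝ))) / (4 * Real.pi))) :=
  phi_farfield_limit_general ω θ y hθ
end
end
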